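/- arXiv:1901.07258 — 3 statements merged into one kernel-verified Lean document; each statement's English description precedes it below -/
import Mathlib

section
/- Let ω₁, ω₂ be Hermitian metrics on complex manifolds X₁, X₂ of dimensions n₁, n₂ > 1, with dω_i^{n_i-1} = θ_i ∧ ω_i^{n_i-1} for closed 1-forms θ_i (i = 1,2). Then on X₁ × X₂, setting Ω = pr₁*ω₁ + pr₂*ω₂ and θ = pr₁*θ₁ + pr₂*θ₂, one has dΩ^{n₁+n₂-1} = θ ∧ Ω^{n₁+n₂-1}, and θ is closed. Hence the product of locally conformally balanced manifolds is locally conformally balanced. -/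
/-- Products of locally conformally balanced manifolds are locally
conformally balanced.  `A₁`, `A₂`, `A` are the algebras of differential forms on
`X₁`, `X₂` and `X₁ × X₂`, with exterior derivatives `d₁`, `d₂`, `d` and the
pullbacks `p₁ = pr₁^*`, `p₂ = pr₂^*` (algebra maps commuting with `d`).
`ω_i` are Hermitian metrics with `d_i(ω_i^{n_i-1}) = θ_i ∧ ω_i^{n_i-1}`, `θ_i`
closed 1-forms, `n_i = dim X_i > 1`.  The auxiliary hypotheses record standard
facts: pulled-back even forms are (graded-)central, `d` obeys the sign-free
Leibniz rule on products with even first factor, and forms of too-high degree on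
the factors vanish.  Conclusion: with `Ω = pr₁^*ω₁ + pr₂^*ω₂` and
`θ = pr₁^*θ₁ + pr₂^*θ₂`, one has `dΩ^{n₁+n₂-1} = θ ∧ Ω^{n₁+n₂-1}` and
`dθ = 0`. -/
theorem stmt1 {A₁ A₂ A : Type*}
    [Ring A₁] [Algebra ℝ A₁] [Ring A₂] [Algebra ℝ A₂] [Ring A] [Algebra ℝ A]
    (d₁ : A₁ →ₗ[ℝ] A₁) (d₂ : A₂ →ₗ[ℝ] A₂) (d : A →ₗ[ℝ] A)
    (p₁ : A₁ →ₐ[ℝ] A) (p₂ : A₂ →ₐ[ℝ] A)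
    (hp₁d : ∀ a : A₁, p₁ (d₁ a) = d (p₁ a))
    (hp₂d : ∀ a : A₂, p₂ (d₂ a) = d (p₂ a))
    (ω₁ θ₁ : A₁) (ω₂ θ₂ : A₂) (n₁ n₂ : ℕ) (hn₁ : 1 < n₁) (hn₂ : 1 < n₂)
    -- `X₁` and `X₂` are LC-balanced:
    (hlcb₁ : d₁ (ω₁ ^ (n₁ - 1)) = θ₁ * ω₁ ^ (n₁ - 1)) (hdθ₁ : d₁ θ₁ = 0)
    (hlcb₂ : d₂ (ω₂ ^ (n₂ - 1)) = θ₂ * ω₂ ^ (n₂ - 1)) (hdθ₂ : d₂ θ₂ = 0)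
    -- even (pulled-back) forms commute with everything:
    (hω₁c : ∀ x : A, p₁ ω₁ * x = x * p₁ ω₁)
    (hω₂c : ∀ x : A, p₂ ω₂ * x = x * p₂ ω₂)
    -- Leibniz rule (even first factor):
    (hL₁ : ∀ (k : ℕ) (x : A), d (p₁ ω₁ ^ k * x) = d (p₁ ω₁ ^ k) * x + p₁ ω₁ ^ k * d x)
    (hL₂ : ∀ (k : ℕ) (x : A), d (p₂ ω₂ ^ k * x) = d (p₂ ω₂ ^ k) * x + p₂ ω₂ ^ k * d x)
    -- forms of degree exceeding the dimension of a factor vanish: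
    (htop₁ : ω₁ ^ (n₁ + 1) = 0) (htop₂ : ω₂ ^ (n₂ + 1) = 0)
    (hzd₁ : d₁ (ω₁ ^ n₁) = 0) (hzθ₁ : θ₁ * ω₁ ^ n₁ = 0)
    (hzd₂ : d₂ (ω₂ ^ n₂) = 0) (hzθ₂ : θ₂ * ω₂ ^ n₂ = 0) :
    d ((p₁ ω₁ + p₂ ω₂) ^ (n₁ + n₂ - 1)) =
      (p₁ θ₁ + p₂ θ₂) * (p₁ ω₁ + p₂ ω₂) ^ (n₁ + n₂ - 1) ∧
    d (p₁ θ₁ + p₂ θ₂) = 0 := by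
  set a := p₁ ω₁ with ha
  set b := p₂ ω₂ with hb
  set t₁ := p₁ θ₁ with ht₁
  set t₂ := p₂ θ₂ with ht₂
  set N := n₁ + n₂ - 1 with hN
  have hacen : ∀ (k : ℕ) (x : A), a ^ k * x = x * a ^ k := by
    intro k
    induction k with
    | zero => intro x; simp
    | succ k ih =>
      intro x
      rw [pow_succ, mul_assoc, hω₁c x, ← mul_assoc, ih, mul_assoc]
  have hcomm : Commute a b := (hω₂c a).symm
  have hatop' : ∀ k, n₁ + 1 ≤ k → a ^ k = 0 := fun k hk => by
    obtain ⟨m, rfl⟩ := Nat.exists_eq_add_of_le hk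
    rw [pow_add, ha, ← map_pow, htop₁, map_zero, zero_mul]
  have hbtop' : ∀ k, n₂ + 1 ≤ k → b ^ k = 0 := fun k hk => by
    obtain ⟨m, rfl⟩ := Nat.exists_eq_add_of_le hk
    rw [pow_add, hb, ← map_pow, htop₂, map_zero, zero_mul]
  have hda1 : d (a ^ (n₁ - 1)) = t₁ * a ^ (n₁ - 1) := by
    rw [ha, ← map_pow, ← hp₁d, hlcb₁, map_mul, map_pow]
  have hda2 : d (a ^ n₁) = 0 := by rw [ha, ← map_pow, ← hp₁d, hzd₁, map_zero]
  have hdb1 : d (b ^ (n₂ - 1)) = t₂ * b ^ (n₂ - 1) := by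
    rw [hb, ← map_pow, ← hp₂d, hlcb₂, map_mul, map_pow]
  have hdb2 : d (b ^ n₂) = 0 := by rw [hb, ← map_pow, ← hp₂d, hzd₂, map_zero]
  have hza : t₁ * a ^ n₁ = 0 := by rw [ha, ht₁, ← map_pow, ← map_mul, hzθ₁, map_zero]
  have hzb : t₂ * b ^ n₂ = 0 := by rw [hb, ht₂, ← map_pow, ← map_mul, hzθ₂, map_zero]
  have hpair : (n₁ - 1 : ℕ) ≠ n₁ := by omega
  have hNa : N - (n₁ - 1) = n₂ := by omega
  have hNb : N - n₁ = n₂ - 1 := by omega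
  have hsub : ({n₁ - 1, n₁} : Finset ℕ) ⊆ Finset.range (N + 1) := by
    intro k hk
    simp only [Finset.mem_insert, Finset.mem_singleton] at hk
    rcases hk with rfl | rfl <;> simp only [Finset.mem_range] <;> omega
  -- collapse binomial expansion to two terms, written with ℕ-smul
  have hexp : (a + b) ^ N =
      N.choose (n₁ - 1) • (a ^ (n₁ - 1) * b ^ n₂) +
      N.choose n₁ • (a ^ n₁ * b ^ (n₂ - 1)) := by
    rw [hcomm.add_pow N, ← Finset.sum_subset hsub ?_]
    · rw [Finset.sum_pair hpair, hNa, hNb]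
      congr 1
      · rw [nsmul_eq_mul, (Nat.cast_commute _ _).eq]
      · rw [nsmul_eq_mul, (Nat.cast_commute _ _).eq]
    · intro k hk hk'
      simp only [Finset.mem_insert, Finset.mem_singleton, not_or] at hk'
      simp only [Finset.mem_range] at hk
      rcases le_or_gt k (n₁ - 1) with h | h
      · have : n₂ + 1 ≤ N - k := by omega
        rw [hbtop' _ this, mul_zero, zero_mul]
      · have : n₁ + 1 ≤ k := by omega
        rw [hatop' _ this, zero_mul, zero_mul]
  have hdx : d (a ^ (n₁ - 1) * b ^ n₂) = t₁ * (a ^ (n₁ - 1) * b ^ n₂) := by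
    rw [hL₁, hda1, hdb2, mul_zero, add_zero, mul_assoc]
  have hdy : d (a ^ n₁ * b ^ (n₂ - 1)) = t₂ * (a ^ n₁ * b ^ (n₂ - 1)) := by
    rw [hL₁, hda2, zero_mul, zero_add, hdb1, ← mul_assoc, hacen, mul_assoc]
  have hcx : t₂ * (a ^ (n₁ - 1) * b ^ n₂) = 0 := by
    rw [← mul_assoc, ← hacen, mul_assoc, hzb, mul_zero]
  have hcy : t₁ * (a ^ n₁ * b ^ (n₂ - 1)) = 0 := by
    rw [← mul_assoc, hza, zero_mul]
  refine ⟨?_, ?_⟩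
  · rw [hexp, map_add, map_nsmul, map_nsmul, hdx, hdy, mul_add, mul_smul_comm,
      mul_smul_comm, add_mul, add_mul, hcx, hcy, add_zero, zero_add]
  · rw [map_add, ht₁, ht₂, ← hp₁d, ← hp₂d, hdθ₁, hdθ₂, map_zero, map_zero, add_zero]
end

section
/- Let 𝔥 = 𝔤 ⊕ 𝔤 be as above (each factor with Z central, [Y,T]=Y, [T,U]=U, [Y,U]=Z). If Ω is a positive-definite invariant Hermitian 2-form (more generally, a 2-form with Ω³ nonvanishing on the 6-dimensional subspaces span(Y₁,Z₁,U₁,Y₂,Z₂,U₂)) and θ is a closed 1-form satisfying dΩ³ = θ ∧ Ω³, then θ = 0. -/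
/-- The Lie bracket of `𝔥 = 𝔤 ⊕ 𝔤` on the 8-dimensional space with ordered
basis `(Y₁, Z₁, T₁, U₁, Y₂, Z₂, T₂, U₂)`: in each copy `Z` is central,
`[Y,T] = Y`, `[T,U] = U`, `[Y,U] = Z`. -/
def brack8 (x y : Fin 8 → ℝ) : Fin 8 → ℝ :=
  ![x 0 * y 2 - x 2 * y 0, x 0 * y 3 - x 3 * y 0, 0, x 2 * y 3 - x 3 * y 2,
    x 4 * y 6 - x 6 * y 4, x 4 * y 7 - x 7 * y 4, 0, x 6 * y 7 - x 7 * y 6]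

/-- The `i`-th standard basis vector (`Y₁, Z₁, T₁, U₁, Y₂, Z₂, T₂, U₂` for
`i = 0, …, 7`). -/
noncomputable def e (i : Fin 8) : Fin 8 → ℝ := Pi.single i 1

/-- The wedge cube `Ω³ = Ω ∧ Ω ∧ Ω` of a 2-form `Ω`, evaluated on a 6-tuple of
vectors (alternating-forms convention: signed sum over all permutations divided
by `2³·3! = 48`). -/
noncomputable def cube (Ω : (Fin 8 → ℝ) → (Fin 8 → ℝ) → ℝ)
    (v : Fin 6 → (Fin 8 → ℝ)) : ℝ :=
  (48 : ℝ)⁻¹ * ∑ σ : Equiv.Perm (Fin 6),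
    ((Equiv.Perm.sign σ : ℤ) : ℝ) *
      (Ω (v (σ 0)) (v (σ 1)) * Ω (v (σ 2)) (v (σ 3)) * Ω (v (σ 4)) (v (σ 5)))

/-- The Chevalley–Eilenberg differential of a 6-form `F` on `𝔥`, evaluated on a
7-tuple: `dF(x₀,…,x₆) = Σ_{i<j} (-1)^{i+j} F([x_i,x_j], x₀,…,x̂_i,…,x̂_j,…,x₆)`. -/
noncomputable def ceD (F : (Fin 6 → (Fin 8 → ℝ)) → ℝ)
    (v : Fin 7 → (Fin 8 → ℝ)) : ℝ :=
  ∑ i : Fin 7, ∑ j : Fin 7,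
    if h : i < j then
      (-1 : ℝ) ^ ((i : ℕ) + (j : ℕ)) *
        F (Fin.cons (brack8 (v i) (v j))
            (fun k : Fin 5 =>
              v (j.succAbove
                  ((⟨(i : ℕ), Nat.lt_of_lt_of_le h (Nat.lt_succ_iff.mp j.isLt)⟩ :
                      Fin 6).succAbove k))))
    else 0

/-- The wedge product `θ ∧ F` of a 1-form `θ` with a 6-form `F`, evaluated on a
7-tuple: `(θ ∧ F)(x₀,…,x₆) = Σ_i (-1)^i θ(x_i) F(x₀,…,x̂_i,…,x₆)`. -/
noncomputable def wedge1 (θ : (Fin 8 → ℝ) → ℝ) (F : (Fin 6 → (Fin 8 → ℝ)) → ℝ)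
    (v : Fin 7 → (Fin 8 → ℝ)) : ℝ :=
  ∑ i : Fin 7, (-1 : ℝ) ^ (i : ℕ) * θ (v i) * F (v ∘ i.succAbove)

namespace Stmt8Aux

/- Fin.val of literals in Fin 7 -/

@[simp] lemma finval0 : ((0 : Fin 7) : ℕ) = 0 := rfl
@[simp] lemma finval1 : ((1 : Fin 7) : ℕ) = 1 := rfl
@[simp] lemma finval2 : ((2 : Fin 7) : ℕ) = 2 := rfl
@[simp] lemma finval3 : ((3 : Fin 7) : ℕ) = 3 := rfl
@[simp] lemma finval4 : ((4 : Fin 7) : ℕ) = 4 := rfl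
@[simp] lemma finval5 : ((5 : Fin 7) : ℕ) = 5 := rfl
@[simp] lemma finval6 : ((6 : Fin 7) : ℕ) = 6 := rfl

/- bracket evaluations on basis vectors -/

lemma brz01 : brack8 (e 0) (e 1) = 0 := by
  funext r; fin_cases r <;> first | rfl | (simp [brack8, e, Pi.single_apply]; try rfl)
lemma brz04 : brack8 (e 0) (e 4) = 0 := by
  funext r; fin_cases r <;> first | rfl | (simp [brack8, e, Pi.single_apply]; try rfl)
lemma brz05 : brack8 (e 0) (e 5) = 0 := by
  funext r; fin_cases r <;> first | rfl | (simp [brack8, e, Pi.single_apply]; try rfl)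
lemma brz07 : brack8 (e 0) (e 7) = 0 := by
  funext r; fin_cases r <;> first | rfl | (simp [brack8, e, Pi.single_apply]; try rfl)
lemma brz12 : brack8 (e 1) (e 2) = 0 := by
  funext r; fin_cases r <;> first | rfl | (simp [brack8, e, Pi.single_apply]; try rfl)
lemma brz13 : brack8 (e 1) (e 3) = 0 := by
  funext r; fin_cases r <;> first | rfl | (simp [brack8, e, Pi.single_apply]; try rfl)
lemma brz14 : brack8 (e 1) (e 4) = 0 := by
  funext r; fin_cases r <;> first | rfl | (simp [brack8, e, Pi.single_apply]; try rfl)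
lemma brz15 : brack8 (e 1) (e 5) = 0 := by
  funext r; fin_cases r <;> first | rfl | (simp [brack8, e, Pi.single_apply]; try rfl)
lemma brz17 : brack8 (e 1) (e 7) = 0 := by
  funext r; fin_cases r <;> first | rfl | (simp [brack8, e, Pi.single_apply]; try rfl)
lemma brz24 : brack8 (e 2) (e 4) = 0 := by
  funext r; fin_cases r <;> first | rfl | (simp [brack8, e, Pi.single_apply]; try rfl)
lemma brz25 : brack8 (e 2) (e 5) = 0 := by
  funext r; fin_cases r <;> first | rfl | (simp [brack8, e, Pi.single_apply]; try rfl)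
lemma brz27 : brack8 (e 2) (e 7) = 0 := by
  funext r; fin_cases r <;> first | rfl | (simp [brack8, e, Pi.single_apply]; try rfl)
lemma brz34 : brack8 (e 3) (e 4) = 0 := by
  funext r; fin_cases r <;> first | rfl | (simp [brack8, e, Pi.single_apply]; try rfl)
lemma brz35 : brack8 (e 3) (e 5) = 0 := by
  funext r; fin_cases r <;> first | rfl | (simp [brack8, e, Pi.single_apply]; try rfl)
lemma brz37 : brack8 (e 3) (e 7) = 0 := by
  funext r; fin_cases r <;> first | rfl | (simp [brack8, e, Pi.single_apply]; try rfl)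
lemma brz40 : brack8 (e 4) (e 0) = 0 := by
  funext r; fin_cases r <;> first | rfl | (simp [brack8, e, Pi.single_apply]; try rfl)
lemma brz41 : brack8 (e 4) (e 1) = 0 := by
  funext r; fin_cases r <;> first | rfl | (simp [brack8, e, Pi.single_apply]; try rfl)
lemma brz43 : brack8 (e 4) (e 3) = 0 := by
  funext r; fin_cases r <;> first | rfl | (simp [brack8, e, Pi.single_apply]; try rfl)
lemma brz45 : brack8 (e 4) (e 5) = 0 := by
  funext r; fin_cases r <;> first | rfl | (simp [brack8, e, Pi.single_apply]; try rfl)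
lemma brz50 : brack8 (e 5) (e 0) = 0 := by
  funext r; fin_cases r <;> first | rfl | (simp [brack8, e, Pi.single_apply]; try rfl)
lemma brz51 : brack8 (e 5) (e 1) = 0 := by
  funext r; fin_cases r <;> first | rfl | (simp [brack8, e, Pi.single_apply]; try rfl)
lemma brz53 : brack8 (e 5) (e 3) = 0 := by
  funext r; fin_cases r <;> first | rfl | (simp [brack8, e, Pi.single_apply]; try rfl)
lemma brz56 : brack8 (e 5) (e 6) = 0 := by
  funext r; fin_cases r <;> first | rfl | (simp [brack8, e, Pi.single_apply]; try rfl)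
lemma brz57 : brack8 (e 5) (e 7) = 0 := by
  funext r; fin_cases r <;> first | rfl | (simp [brack8, e, Pi.single_apply]; try rfl)
lemma brz60 : brack8 (e 6) (e 0) = 0 := by
  funext r; fin_cases r <;> first | rfl | (simp [brack8, e, Pi.single_apply]; try rfl)
lemma brz61 : brack8 (e 6) (e 1) = 0 := by
  funext r; fin_cases r <;> first | rfl | (simp [brack8, e, Pi.single_apply]; try rfl)
lemma brz63 : brack8 (e 6) (e 3) = 0 := by
  funext r; fin_cases r <;> first | rfl | (simp [brack8, e, Pi.single_apply]; try rfl)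
lemma brz70 : brack8 (e 7) (e 0) = 0 := by
  funext r; fin_cases r <;> first | rfl | (simp [brack8, e, Pi.single_apply]; try rfl)
lemma brz71 : brack8 (e 7) (e 1) = 0 := by
  funext r; fin_cases r <;> first | rfl | (simp [brack8, e, Pi.single_apply]; try rfl)
lemma brz73 : brack8 (e 7) (e 3) = 0 := by
  funext r; fin_cases r <;> first | rfl | (simp [brack8, e, Pi.single_apply]; try rfl)
lemma br02 : brack8 (e 0) (e 2) = e 0 := by
  funext r; fin_cases r <;> first | rfl | (simp [brack8, e, Pi.single_apply]; try rfl)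
lemma br03 : brack8 (e 0) (e 3) = e 1 := by
  funext r; fin_cases r <;> first | rfl | (simp [brack8, e, Pi.single_apply]; try rfl)
lemma br23 : brack8 (e 2) (e 3) = e 3 := by
  funext r; fin_cases r <;> first | rfl | (simp [brack8, e, Pi.single_apply]; try rfl)
lemma br46 : brack8 (e 4) (e 6) = e 4 := by
  funext r; fin_cases r <;> first | rfl | (simp [brack8, e, Pi.single_apply]; try rfl)
lemma br47 : brack8 (e 4) (e 7) = e 5 := by
  funext r; fin_cases r <;> first | rfl | (simp [brack8, e, Pi.single_apply]; try rfl)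
lemma br67 : brack8 (e 6) (e 7) = e 7 := by
  funext r; fin_cases r <;> first | rfl | (simp [brack8, e, Pi.single_apply]; try rfl)

/- tuple shape lemmas for the ceD terms -/

lemma tup01 (v : Fin 7 → Fin 8 → ℝ) (b : Fin 8 → ℝ) (pf : (0 : ℕ) < 6) :
    (Fin.cons b (fun k : Fin 5 => v ((1 : Fin 7).succAbove ((⟨0, pf⟩ : Fin 6).succAbove k))) : Fin 6 → Fin 8 → ℝ)
      = ![b, v 2, v 3, v 4, v 5, v 6] := by
  funext k; fin_cases k <;> rfl
lemma tup02 (v : Fin 7 → Fin 8 → ℝ) (b : Fin 8 → ℝ) (pf : (0 : ℕ) < 6) :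
    (Fin.cons b (fun k : Fin 5 => v ((2 : Fin 7).succAbove ((⟨0, pf⟩ : Fin 6).succAbove k))) : Fin 6 → Fin 8 → ℝ)
      = ![b, v 1, v 3, v 4, v 5, v 6] := by
  funext k; fin_cases k <;> rfl
lemma tup03 (v : Fin 7 → Fin 8 → ℝ) (b : Fin 8 → ℝ) (pf : (0 : ℕ) < 6) :
    (Fin.cons b (fun k : Fin 5 => v ((3 : Fin 7).succAbove ((⟨0, pf⟩ : Fin 6).succAbove k))) : Fin 6 → Fin 8 → ℝ)
      = ![b, v 1, v 2, v 4, v 5, v 6] := by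
  funext k; fin_cases k <;> rfl
lemma tup04 (v : Fin 7 → Fin 8 → ℝ) (b : Fin 8 → ℝ) (pf : (0 : ℕ) < 6) :
    (Fin.cons b (fun k : Fin 5 => v ((4 : Fin 7).succAbove ((⟨0, pf⟩ : Fin 6).succAbove k))) : Fin 6 → Fin 8 → ℝ)
      = ![b, v 1, v 2, v 3, v 5, v 6] := by
  funext k; fin_cases k <;> rfl
lemma tup05 (v : Fin 7 → Fin 8 → ℝ) (b : Fin 8 → ℝ) (pf : (0 : ℕ) < 6) :
    (Fin.cons b (fun k : Fin 5 => v ((5 : Fin 7).succAbove ((⟨0, pf⟩ : Fin 6).succAbove k))) : Fin 6 → Fin 8 → ℝ)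
      = ![b, v 1, v 2, v 3, v 4, v 6] := by
  funext k; fin_cases k <;> rfl
lemma tup06 (v : Fin 7 → Fin 8 → ℝ) (b : Fin 8 → ℝ) (pf : (0 : ℕ) < 6) :
    (Fin.cons b (fun k : Fin 5 => v ((6 : Fin 7).succAbove ((⟨0, pf⟩ : Fin 6).succAbove k))) : Fin 6 → Fin 8 → ℝ)
      = ![b, v 1, v 2, v 3, v 4, v 5] := by
  funext k; fin_cases k <;> rfl
lemma tup12 (v : Fin 7 → Fin 8 → ℝ) (b : Fin 8 → ℝ) (pf : (1 : ℕ) < 6) :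
    (Fin.cons b (fun k : Fin 5 => v ((2 : Fin 7).succAbove ((⟨1, pf⟩ : Fin 6).succAbove k))) : Fin 6 → Fin 8 → ℝ)
      = ![b, v 0, v 3, v 4, v 5, v 6] := by
  funext k; fin_cases k <;> rfl
lemma tup13 (v : Fin 7 → Fin 8 → ℝ) (b : Fin 8 → ℝ) (pf : (1 : ℕ) < 6) :
    (Fin.cons b (fun k : Fin 5 => v ((3 : Fin 7).succAbove ((⟨1, pf⟩ : Fin 6).succAbove k))) : Fin 6 → Fin 8 → ℝ)
      = ![b, v 0, v 2, v 4, v 5, v 6] := by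
  funext k; fin_cases k <;> rfl
lemma tup14 (v : Fin 7 → Fin 8 → ℝ) (b : Fin 8 → ℝ) (pf : (1 : ℕ) < 6) :
    (Fin.cons b (fun k : Fin 5 => v ((4 : Fin 7).succAbove ((⟨1, pf⟩ : Fin 6).succAbove k))) : Fin 6 → Fin 8 → ℝ)
      = ![b, v 0, v 2, v 3, v 5, v 6] := by
  funext k; fin_cases k <;> rfl
lemma tup15 (v : Fin 7 → Fin 8 → ℝ) (b : Fin 8 → ℝ) (pf : (1 : ℕ) < 6) :
    (Fin.cons b (fun k : Fin 5 => v ((5 : Fin 7).succAbove ((⟨1, pf⟩ : Fin 6).succAbove k))) : Fin 6 → Fin 8 → ℝ)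
      = ![b, v 0, v 2, v 3, v 4, v 6] := by
  funext k; fin_cases k <;> rfl
lemma tup16 (v : Fin 7 → Fin 8 → ℝ) (b : Fin 8 → ℝ) (pf : (1 : ℕ) < 6) :
    (Fin.cons b (fun k : Fin 5 => v ((6 : Fin 7).succAbove ((⟨1, pf⟩ : Fin 6).succAbove k))) : Fin 6 → Fin 8 → ℝ)
      = ![b, v 0, v 2, v 3, v 4, v 5] := by
  funext k; fin_cases k <;> rfl
lemma tup23 (v : Fin 7 → Fin 8 → ℝ) (b : Fin 8 → ℝ) (pf : (2 : ℕ) < 6) :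
    (Fin.cons b (fun k : Fin 5 => v ((3 : Fin 7).succAbove ((⟨2, pf⟩ : Fin 6).succAbove k))) : Fin 6 → Fin 8 → ℝ)
      = ![b, v 0, v 1, v 4, v 5, v 6] := by
  funext k; fin_cases k <;> rfl
lemma tup24 (v : Fin 7 → Fin 8 → ℝ) (b : Fin 8 → ℝ) (pf : (2 : ℕ) < 6) :
    (Fin.cons b (fun k : Fin 5 => v ((4 : Fin 7).succAbove ((⟨2, pf⟩ : Fin 6).succAbove k))) : Fin 6 → Fin 8 → ℝ)
      = ![b, v 0, v 1, v 3, v 5, v 6] := by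
  funext k; fin_cases k <;> rfl
lemma tup25 (v : Fin 7 → Fin 8 → ℝ) (b : Fin 8 → ℝ) (pf : (2 : ℕ) < 6) :
    (Fin.cons b (fun k : Fin 5 => v ((5 : Fin 7).succAbove ((⟨2, pf⟩ : Fin 6).succAbove k))) : Fin 6 → Fin 8 → ℝ)
      = ![b, v 0, v 1, v 3, v 4, v 6] := by
  funext k; fin_cases k <;> rfl
lemma tup26 (v : Fin 7 → Fin 8 → ℝ) (b : Fin 8 → ℝ) (pf : (2 : ℕ) < 6) :
    (Fin.cons b (fun k : Fin 5 => v ((6 : Fin 7).succAbove ((⟨2, pf⟩ : Fin 6).succAbove k))) : Fin 6 → Fin 8 → ℝ)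
      = ![b, v 0, v 1, v 3, v 4, v 5] := by
  funext k; fin_cases k <;> rfl
lemma tup34 (v : Fin 7 → Fin 8 → ℝ) (b : Fin 8 → ℝ) (pf : (3 : ℕ) < 6) :
    (Fin.cons b (fun k : Fin 5 => v ((4 : Fin 7).succAbove ((⟨3, pf⟩ : Fin 6).succAbove k))) : Fin 6 → Fin 8 → ℝ)
      = ![b, v 0, v 1, v 2, v 5, v 6] := by
  funext k; fin_cases k <;> rfl
lemma tup35 (v : Fin 7 → Fin 8 → ℝ) (b : Fin 8 → ℝ) (pf : (3 : ℕ) < 6) :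
    (Fin.cons b (fun k : Fin 5 => v ((5 : Fin 7).succAbove ((⟨3, pf⟩ : Fin 6).succAbove k))) : Fin 6 → Fin 8 → ℝ)
      = ![b, v 0, v 1, v 2, v 4, v 6] := by
  funext k; fin_cases k <;> rfl
lemma tup36 (v : Fin 7 → Fin 8 → ℝ) (b : Fin 8 → ℝ) (pf : (3 : ℕ) < 6) :
    (Fin.cons b (fun k : Fin 5 => v ((6 : Fin 7).succAbove ((⟨3, pf⟩ : Fin 6).succAbove k))) : Fin 6 → Fin 8 → ℝ)
      = ![b, v 0, v 1, v 2, v 4, v 5] := by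
  funext k; fin_cases k <;> rfl
lemma tup45 (v : Fin 7 → Fin 8 → ℝ) (b : Fin 8 → ℝ) (pf : (4 : ℕ) < 6) :
    (Fin.cons b (fun k : Fin 5 => v ((5 : Fin 7).succAbove ((⟨4, pf⟩ : Fin 6).succAbove k))) : Fin 6 → Fin 8 → ℝ)
      = ![b, v 0, v 1, v 2, v 3, v 6] := by
  funext k; fin_cases k <;> rfl
lemma tup46 (v : Fin 7 → Fin 8 → ℝ) (b : Fin 8 → ℝ) (pf : (4 : ℕ) < 6) :
    (Fin.cons b (fun k : Fin 5 => v ((6 : Fin 7).succAbove ((⟨4, pf⟩ : Fin 6).succAbove k))) : Fin 6 → Fin 8 → ℝ)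
      = ![b, v 0, v 1, v 2, v 3, v 5] := by
  funext k; fin_cases k <;> rfl
lemma tup56 (v : Fin 7 → Fin 8 → ℝ) (b : Fin 8 → ℝ) (pf : (5 : ℕ) < 6) :
    (Fin.cons b (fun k : Fin 5 => v ((6 : Fin 7).succAbove ((⟨5, pf⟩ : Fin 6).succAbove k))) : Fin 6 → Fin 8 → ℝ)
      = ![b, v 0, v 1, v 2, v 3, v 4] := by
  funext k; fin_cases k <;> rfl

def tau : Equiv.Perm (Fin 6) := Equiv.swap 1 2 * Equiv.swap 0 1

section
variable (Ω : (Fin 8 → ℝ) →ₗ[ℝ] (Fin 8 → ℝ) →ₗ[ℝ] ℝ)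

lemma cube_zero (w : Fin 6 → Fin 8 → ℝ) (m : Fin 6) (h : w m = 0) :
    cube (fun x y => Ω x y) w = 0 := by
  unfold cube
  rw [Finset.sum_eq_zero, mul_zero]
  intro σ _
  obtain ⟨k, hk⟩ : ∃ k, σ k = m := ⟨σ⁻¹ m, Equiv.apply_symm_apply σ m⟩
  have h0 : w (σ k) = 0 := by rw [hk, h]
  fin_cases k <;> simp_all

lemma cube_head_zero (x1 x2 x3 x4 x5 : Fin 8 → ℝ) :
    cube (fun x y => Ω x y) ![0, x1, x2, x3, x4, x5] = 0 :=
  cube_zero Ω _ 0 rfl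

lemma cube_comp (v : Fin 6 → Fin 8 → ℝ) (τ : Equiv.Perm (Fin 6)) :
    cube (fun x y => Ω x y) (fun k => v (τ k)) =
      ((Equiv.Perm.sign τ : ℤ) : ℝ) * cube (fun x y => Ω x y) v := by
  unfold cube
  rw [← mul_assoc, mul_comm (((Equiv.Perm.sign τ : ℤ) : ℝ)) ((48:ℝ)⁻¹), mul_assoc]
  congr 1
  rw [Finset.mul_sum]
  have key : ∀ σ : Equiv.Perm (Fin 6),
      ((Equiv.Perm.sign σ : ℤ) : ℝ) =
        ((Equiv.Perm.sign τ : ℤ) : ℝ) * ((Equiv.Perm.sign (τ * σ) : ℤ) : ℝ) := by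
    intro σ
    have : Equiv.Perm.sign τ * Equiv.Perm.sign (τ * σ) = Equiv.Perm.sign σ := by
      rw [Equiv.Perm.sign_mul, ← mul_assoc, Int.units_mul_self, one_mul]
    push_cast [← this]
    ring
  calc (∑ σ : Equiv.Perm (Fin 6), ((Equiv.Perm.sign σ : ℤ) : ℝ) *
        (Ω (v (τ (σ 0))) (v (τ (σ 1))) * Ω (v (τ (σ 2))) (v (τ (σ 3))) * Ω (v (τ (σ 4))) (v (τ (σ 5)))))
      = ∑ σ : Equiv.Perm (Fin 6), ((Equiv.Perm.sign τ : ℤ) : ℝ) *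
          (((Equiv.Perm.sign (τ * σ) : ℤ) : ℝ) *
          (Ω (v ((τ * σ) 0)) (v ((τ * σ) 1)) * Ω (v ((τ * σ) 2)) (v ((τ * σ) 3)) * Ω (v ((τ * σ) 4)) (v ((τ * σ) 5)))) := by
        refine Finset.sum_congr rfl fun σ _ => ?_
        simp only [Equiv.Perm.mul_apply]
        rw [key σ]; ring
    _ = ∑ σ : Equiv.Perm (Fin 6), ((Equiv.Perm.sign τ : ℤ) : ℝ) *
          (((Equiv.Perm.sign σ : ℤ) : ℝ) *
          (Ω (v (σ 0)) (v (σ 1)) * Ω (v (σ 2)) (v (σ 3)) * Ω (v (σ 4)) (v (σ 5)))) := by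
        exact Equiv.sum_comp (Equiv.mulLeft τ) fun ρ => ((Equiv.Perm.sign τ : ℤ) : ℝ) *
          (((Equiv.Perm.sign ρ : ℤ) : ℝ) *
          (Ω (v (ρ 0)) (v (ρ 1)) * Ω (v (ρ 2)) (v (ρ 3)) * Ω (v (ρ 4)) (v (ρ 5))))
    _ = _ := by refine Finset.sum_congr rfl fun σ _ => ?_; ring

lemma cube_repeat (v : Fin 6 → Fin 8 → ℝ) (i j : Fin 6) (hij : i ≠ j) (h : v i = v j) :
    cube (fun x y => Ω x y) v = 0 := by
  have h2 : (fun k => v (Equiv.swap i j k)) = v := by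
    funext k
    rcases eq_or_ne k i with rfl | hki
    · rw [Equiv.swap_apply_left, h]
    rcases eq_or_ne k j with rfl | hkj
    · rw [Equiv.swap_apply_right, h]
    · rw [Equiv.swap_apply_of_ne_of_ne hki hkj]
  have h3 := cube_comp Ω v (Equiv.swap i j)
  rw [h2, Equiv.Perm.sign_swap hij] at h3
  simp at h3
  linarith

lemma repeatA1 : cube (fun x y => Ω x y) ![e 1, e 1, e 2, e 4, e 5, e 7] = 0 :=
  cube_repeat Ω _ 0 1 (by decide) rfl

lemma repeatA2 : cube (fun x y => Ω x y) ![e 5, e 0, e 1, e 2, e 3, e 5] = 0 :=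
  cube_repeat Ω _ 0 5 (by decide) rfl

lemma repeatB1 : cube (fun x y => Ω x y) ![e 5, e 5, e 6, e 0, e 1, e 3] = 0 :=
  cube_repeat Ω _ 0 1 (by decide) rfl

lemma repeatB2 : cube (fun x y => Ω x y) ![e 1, e 4, e 5, e 6, e 7, e 1] = 0 :=
  cube_repeat Ω _ 0 5 (by decide) rfl

lemma permA : cube (fun x y => Ω x y) ![e 3, e 0, e 1, e 4, e 5, e 7]
    = cube (fun x y => Ω x y) ![e 0, e 1, e 3, e 4, e 5, e 7] := by
  have h := cube_comp Ω ![e 0, e 1, e 3, e 4, e 5, e 7] tau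
  rw [show (fun k => (![e 0, e 1, e 3, e 4, e 5, e 7] : Fin 6 → Fin 8 → ℝ) (tau k))
      = ![e 3, e 0, e 1, e 4, e 5, e 7] from funext fun k => by fin_cases k <;> rfl] at h
  rw [h, show Equiv.Perm.sign tau = 1 from by decide]
  norm_num

lemma permB : cube (fun x y => Ω x y) ![e 7, e 4, e 5, e 0, e 1, e 3]
    = cube (fun x y => Ω x y) ![e 4, e 5, e 7, e 0, e 1, e 3] := by
  have h := cube_comp Ω ![e 4, e 5, e 7, e 0, e 1, e 3] tau
  rw [show (fun k => (![e 4, e 5, e 7, e 0, e 1, e 3] : Fin 6 → Fin 8 → ℝ) (tau k))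
      = ![e 7, e 4, e 5, e 0, e 1, e 3] from funext fun k => by fin_cases k <;> rfl] at h
  rw [h, show Equiv.Perm.sign tau = 1 from by decide]
  norm_num

end

noncomputable def vA : Fin 7 → Fin 8 → ℝ := ![e 0, e 1, e 2, e 3, e 4, e 5, e 7]
noncomputable def vB : Fin 7 → Fin 8 → ℝ := ![e 4, e 5, e 6, e 7, e 0, e 1, e 3]

@[simp] lemma vA0 : vA 0 = e 0 := rfl
@[simp] lemma vA1 : vA 1 = e 1 := rfl
@[simp] lemma vA2 : vA 2 = e 2 := rfl
@[simp] lemma vA3 : vA 3 = e 3 := rfl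
@[simp] lemma vA4 : vA 4 = e 4 := rfl
@[simp] lemma vA5 : vA 5 = e 5 := rfl
@[simp] lemma vA6 : vA 6 = e 7 := rfl
@[simp] lemma vB0 : vB 0 = e 4 := rfl
@[simp] lemma vB1 : vB 1 = e 5 := rfl
@[simp] lemma vB2 : vB 2 = e 6 := rfl
@[simp] lemma vB3 : vB 3 = e 7 := rfl
@[simp] lemma vB4 : vB 4 = e 0 := rfl
@[simp] lemma vB5 : vB 5 = e 1 := rfl
@[simp] lemma vB6 : vB 6 = e 3 := rfl

lemma vAsa2 : vA ∘ (2 : Fin 7).succAbove = ![e 0, e 1, e 3, e 4, e 5, e 7] :=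
  funext fun k => by fin_cases k <;> rfl

lemma vBsa2 : vB ∘ (2 : Fin 7).succAbove = ![e 4, e 5, e 7, e 0, e 1, e 3] :=
  funext fun k => by fin_cases k <;> rfl

end Stmt8Aux

open Stmt8Aux

/-- on the Lie algebra `𝔥 = 𝔤 ⊕ 𝔤`, if `Ω` is a 2-form whose wedge
cube `Ω³` is nonvanishing on the 6-dimensional subspaces spanned by
`(Y₁,Z₁,U₁,Y₂,Z₂,U₂)` (as happens for a positive-definite invariant Hermitian
form), and `θ` is a closed 1-form satisfying `dΩ³ = θ ∧ Ω³` (Chevalley–Eilenberg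
differential), then `θ = 0`. -/
theorem stmt8 (Ω : (Fin 8 → ℝ) →ₗ[ℝ] (Fin 8 → ℝ) →ₗ[ℝ] ℝ)
    (hskew : ∀ x y, Ω x y = -Ω y x)
    (hpos₁ : cube (fun x y => Ω x y) ![e 0, e 1, e 3, e 4, e 5, e 7] ≠ 0)
    (hpos₂ : cube (fun x y => Ω x y) ![e 4, e 5, e 7, e 0, e 1, e 3] ≠ 0)
    (θ : (Fin 8 → ℝ) →ₗ[ℝ] ℝ)
    (hclosed : ∀ x y : Fin 8 → ℝ, θ (brack8 x y) = 0)
    (hmain : ∀ v : Fin 7 → (Fin 8 → ℝ),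
      ceD (cube (fun x y => Ω x y)) v = wedge1 (fun x => θ x) (cube (fun x y => Ω x y)) v) :
    θ = 0 := by
  have t0 : θ (e 0) = 0 := by have h := hclosed (e 0) (e 2); rwa [br02] at h
  have t1 : θ (e 1) = 0 := by have h := hclosed (e 0) (e 3); rwa [br03] at h
  have t3 : θ (e 3) = 0 := by have h := hclosed (e 2) (e 3); rwa [br23] at h
  have t4 : θ (e 4) = 0 := by have h := hclosed (e 4) (e 6); rwa [br46] at h
  have t5 : θ (e 5) = 0 := by have h := hclosed (e 4) (e 7); rwa [br47] at h
  have t7 : θ (e 7) = 0 := by have h := hclosed (e 6) (e 7); rwa [br67] at h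
  have h2 : θ (e 2) = 0 := by
    have H := hmain vA
    have hL : ceD (cube (fun x y => Ω x y)) vA = 0 := by
      unfold ceD
      simp only [Fin.sum_univ_seven, Fin.isValue, Fin.reduceLT, reduceDIte]
      simp only [finval0, finval1, finval2, finval3, finval4, finval5, finval6,
        tup01, tup02, tup03, tup04, tup05, tup06, tup12, tup13, tup14, tup15, tup16,
        tup23, tup24, tup25, tup26, tup34, tup35, tup36, tup45, tup46, tup56,
        vA0, vA1, vA2, vA3, vA4, vA5, vA6,
        brz01, brz04, brz05, brz07, brz12, brz13, brz14, brz15, brz17, brz24, brz25, brz27, brz34, brz35, brz37, brz40, brz41, brz43, brz45, brz50, brz51, brz53, brz56, brz57, brz60, brz61, brz63, brz70, brz71, brz73, br02, br03, br23, br46, br47, br67,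
        cube_head_zero Ω, repeatA1 Ω, repeatA2 Ω, permA Ω]
      norm_num
    have hR : wedge1 (fun x => θ x) (cube (fun x y => Ω x y)) vA
        = θ (e 2) * cube (fun x y => Ω x y) ![e 0, e 1, e 3, e 4, e 5, e 7] := by
      unfold wedge1
      simp only [Fin.sum_univ_seven, Fin.isValue,
        finval0, finval1, finval2, finval3, finval4, finval5, finval6,
        vA0, vA1, vA2, vA3, vA4, vA5, vA6, vAsa2, t0, t1, t3, t4, t5, t7]
      norm_num
    rw [hL, hR] at H
    rcases mul_eq_zero.mp H.symm with h | h
    · exact h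
    · exact absurd h hpos₁
  have h6 : θ (e 6) = 0 := by
    have H := hmain vB
    have hL : ceD (cube (fun x y => Ω x y)) vB = 0 := by
      unfold ceD
      simp only [Fin.sum_univ_seven, Fin.isValue, Fin.reduceLT, reduceDIte]
      simp only [finval0, finval1, finval2, finval3, finval4, finval5, finval6,
        tup01, tup02, tup03, tup04, tup05, tup06, tup12, tup13, tup14, tup15, tup16,
        tup23, tup24, tup25, tup26, tup34, tup35, tup36, tup45, tup46, tup56,
        vB0, vB1, vB2, vB3, vB4, vB5, vB6,
        brz01, brz04, brz05, brz07, brz12, brz13, brz14, brz15, brz17, brz24, brz25, brz27, brz34, brz35, brz37, brz40, brz41, brz43, brz45, brz50, brz51, brz53, brz56, brz57, brz60, brz61, brz63, brz70, brz71, brz73, br02, br03, br23, br46, br47, br67,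
        cube_head_zero Ω, repeatB1 Ω, repeatB2 Ω, permB Ω]
      norm_num
    have hR : wedge1 (fun x => θ x) (cube (fun x y => Ω x y)) vB
        = θ (e 6) * cube (fun x y => Ω x y) ![e 4, e 5, e 7, e 0, e 1, e 3] := by
      unfold wedge1
      simp only [Fin.sum_univ_seven, Fin.isValue,
        finval0, finval1, finval2, finval3, finval4, finval5, finval6,
        vB0, vB1, vB2, vB3, vB4, vB5, vB6, vBsa2, t0, t1, t3, t4, t5, t7]
      norm_num
    rw [hL, hR] at H
    rcases mul_eq_zero.mp H.symm with h | h
    · exact h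
    · exact absurd h hpos₂
  apply LinearMap.ext
  intro x
  conv_lhs => rw [pi_eq_sum_univ x]
  rw [map_sum]
  rw [show (0 : (Fin 8 → ℝ) →ₗ[ℝ] ℝ) x = 0 from rfl]
  refine Finset.sum_eq_zero fun i _ => ?_
  rw [map_smul]
  have he : (fun j => if i = j then (1:ℝ) else 0) = e i := by
    funext j
    simp [e, Pi.single_apply, eq_comm]
  rw [he]
  fin_cases i <;>
    simp [t0, t1, h2, t3, t4, t5, h6, t7]
end

section
/- Let X be a compact complex manifold and suppose there exists a nonzero positive (1,1)-current T on X that is d-exact. Then X is not strongly Gauduchon. In particular, a compact complex manifold carrying a balanced metric admits no nonzero d-exact positive (1,1)-current. -/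
/-- Let `X` be a compact complex `n`-manifold.  `A` is the algebra
of smooth forms with exterior derivative `d`, `D` the space of currents with
differential `dD`, `Pos T` means `T` is a positive (1,1)-current, and
`pair T φ = T(φ)` is the pairing of currents with forms, satisfying Stokes
(`(dD S)(φ) = -S(dφ)`) and strict positivity against Hermitian powers: for a
Hermitian metric `ω`, a nonzero positive (1,1)-current pairs strictly positively
with `ω^{n-1}`.  `sG` ("strongly Gauduchon") is characterized (Popovici duality)
by the nonexistence of a nonzero d-exact positive (1,1)-current.  Then:
(a) if a nonzero d-exact positive (1,1)-current exists, `X` is not strongly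
Gauduchon; (b) if `X` carries a balanced metric `ω` (`d(ω^{n-1}) = 0`), there is
no nonzero d-exact positive (1,1)-current. -/
theorem stmt16 {A D : Type*} [Ring A] [Algebra ℝ A]
    [AddCommGroup D] [Module ℝ D]
    (d : A →ₗ[ℝ] A) (dD : D →ₗ[ℝ] D)
    (Pos : D → Prop)
    (pair : D →ₗ[ℝ] A →ₗ[ℝ] ℝ)
    (hstokes : ∀ (S : D) (φ : A), pair (dD S) φ = -(pair S (d φ)))
    (ω : A) (n : ℕ) (hn : 1 < n)
    (hstrict : ∀ T : D, Pos T → T ≠ 0 → 0 < pair T (ω ^ (n - 1)))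
    (sG : Prop)
    (hsG : sG ↔ ¬ ∃ T : D, Pos T ∧ T ≠ 0 ∧ ∃ S : D, T = dD S) :
    ((∃ T : D, Pos T ∧ T ≠ 0 ∧ ∃ S : D, T = dD S) → ¬ sG) ∧
    (d (ω ^ (n - 1)) = 0 → ¬ ∃ T : D, Pos T ∧ T ≠ 0 ∧ ∃ S : D, T = dD S) := by
  constructor
  · intro h hs
    exact (hsG.mp hs) h
  · rintro hbal ⟨T, hT, hT0, S, rfl⟩
    have h1 := hstrict _ hT hT0
    rw [hstokes, hbal, map_zero] at h1
    simp at h1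
end
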